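/- Let M be a matroid with adjoint map φ to M'. If H_1, ..., H_m are hyperplanes of M such that for each 1 ≤ k ≤ m−1 the intersection of H_1, ..., H_{k+1} is a proper subset of the intersection of H_1, ..., H_k, then {φ(H_1), ..., φ(H_m)} is an independent set in M'. -/

import Mathlib

open Set

namespace Matroid

variable {α β : Type*}

/-- The rank of a set in a matroid, valued in `ℕ∞`. -/
noncomputable def eRk' (M : Matroid α) (X : Set α) : ℕ∞ :=
  ⨆ I ∈ {I | M.Indep I ∧ I ⊆ X}, I.encard

/-- A hyperplane is a flat of rank `r(M) - 1`. -/
def Hyperplane' (M : Matroid α) (H : Set α) : Prop :=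
  M.IsFlat H ∧ M.eRk' H + 1 = M.eRk' M.E

/-- A point is a rank-one flat. -/
def Point' (M : Matroid α) (P : Set α) : Prop :=
  M.IsFlat P ∧ M.eRk' P = 1

/-- A matroid is simple if every subset of the ground set with at most two elements
is independent (no loops and no parallel pairs). -/
def Simple' (M : Matroid α) : Prop :=
  ∀ X ⊆ M.E, X.encard ≤ 2 → M.Indep X

/-- Deletion of a set from a matroid. -/
def delete' (M : Matroid α) (D : Set α) : Matroid α := M ↾ (M.E \ D)

/-- Contraction of a set in a matroid, defined by duality. -/
def contract' (M : Matroid α) (C : Set α) : Matroid α := (M✶.delete' C)✶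

/-- `φ` is an adjoint map from `M` to `M'` : `M'` is simple of the same rank as `M`,
`φ` maps flats of `M` to flats of `M'` injectively, reversing inclusion, and restricts
to a bijection from the hyperplanes of `M` onto the points of `M'`. -/
def IsAdjointMap (M : Matroid α) (M' : Matroid β) (φ : Set α → Set β) : Prop :=
  M'.Simple' ∧ M'.eRk' M'.E = M.eRk' M.E ∧
  (∀ F, M.IsFlat F → M'.IsFlat (φ F)) ∧
  (∀ ⦃F₁ F₂⦄, M.IsFlat F₁ → M.IsFlat F₂ → φ F₁ = φ F₂ → F₁ = F₂) ∧
  (∀ ⦃F₁ F₂⦄, M.IsFlat F₁ → M.IsFlat F₂ → F₁ ⊆ F₂ → φ F₂ ⊆ φ F₁) ∧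
  (∀ H, M.Hyperplane' H → M'.Point' (φ H)) ∧
  (∀ P, M'.Point' P → ∃ H, M.Hyperplane' H ∧ φ H = P)

/-- `IsMinor N M` means `N` is obtained from `M` by a sequence of deletions and
contractions. -/
inductive IsMinor' : Matroid α → Matroid α → Prop
  | refl (M : Matroid α) : IsMinor' M M
  | delete {M N : Matroid α} (h : IsMinor' N M) (D : Set α) : IsMinor' (N.delete' D) M
  | contract {M N : Matroid α} (h : IsMinor' N M) (C : Set α) : IsMinor' (N.contract' C) M

/-- `M` has an adjoint. -/
def HasAdjoint (M : Matroid α) : Prop :=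
  ∃ (M' : Matroid (Set α)) (φ : Set α → Set (Set α)), IsAdjointMap M M' φ

section Aux

lemma enat_add_right_cancel {x y z : ℕ∞} (hz : z ≠ ⊤) (h : x + z = y + z) : x = y :=
  WithTop.add_right_cancel hz h

variable {M : Matroid α} {I J X Y F G : Set α} {e : α}

lemma encard_le_eRk' (hI : M.Indep I) (hIX : I ⊆ X) : I.encard ≤ M.eRk' X :=
  le_iSup₂_of_le I ⟨hI, hIX⟩ le_rfl

lemma eRk'_le_iff {c : ℕ∞} : M.eRk' X ≤ c ↔ ∀ I, M.Indep I → I ⊆ X → I.encard ≤ c := by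
  simp only [eRk', iSup₂_le_iff, mem_setOf_eq, and_imp]

lemma eRk'_mono (h : X ⊆ Y) : M.eRk' X ≤ M.eRk' Y :=
  eRk'_le_iff.2 fun _ hI hIX => encard_le_eRk' hI (hIX.trans h)

lemma eRk'_le_ground : M.eRk' X ≤ M.eRk' M.E :=
  eRk'_le_iff.2 fun _ hI _ => encard_le_eRk' hI hI.subset_ground

lemma eRk'_ne_top [M.Finite] : M.eRk' X ≠ ⊤ := by
  have h1 : M.eRk' X ≤ M.E.encard :=
    eRk'_le_iff.2 fun _ hI _ => encard_le_encard hI.subset_ground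
  exact fun h => (M.ground_finite.encard_lt_top).ne (top_le_iff.1 (h ▸ h1))

lemma IsBasis'.eRk'_eq (hI : M.IsBasis' I X) : M.eRk' X = I.encard := by
  refine le_antisymm (eRk'_le_iff.2 fun J hJ hJX => ?_) (encard_le_eRk' hI.indep hI.subset)
  by_contra hlt
  push_neg at hlt
  obtain ⟨e, he, hins⟩ := hI.indep.augment hJ hlt
  exact hI.insert_not_indep ⟨hJX he.1, he.2⟩ hins

lemma Indep.eRk'_eq (hI : M.Indep I) : M.eRk' I = I.encard :=
  (hI.isBasis_self).isBasis'.eRk'_eq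

lemma eRk'_closure_eq (hX : X ⊆ M.E) : M.eRk' (M.closure X) = M.eRk' X := by
  obtain ⟨I, hI⟩ := M.exists_isBasis X hX
  rw [hI.isBasis_closure_right.isBasis'.eRk'_eq, hI.isBasis'.eRk'_eq]

lemma eRk'_insert_eq (hX : X ⊆ M.E) (he : e ∈ M.E) (heX : e ∉ M.closure X) :
    M.eRk' (insert e X) = M.eRk' X + 1 := by
  obtain ⟨I, hI⟩ := M.exists_isBasis X hX
  have hecl : e ∉ M.closure I := by rwa [hI.closure_eq_closure]
  have heI : e ∉ I := fun h => hecl (M.mem_closure_of_mem h hI.indep.subset_ground)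
  have hins : M.Indep (insert e I) :=
    (hI.indep.insert_indep_iff_of_notMem heI).2 ⟨he, hecl⟩
  have hbas : M.IsBasis (insert e I) (insert e X) := by
    refine hins.isBasis_of_subset_of_subset_closure (insert_subset_insert hI.subset) ?_
    refine insert_subset (M.mem_closure_of_mem (mem_insert _ _) hins.subset_ground) ?_
    exact (hI.subset_closure).trans (M.closure_subset_closure (subset_insert _ _))
  rw [hbas.isBasis'.eRk'_eq, hI.isBasis'.eRk'_eq, encard_insert_of_notMem heI]

lemma closure_flat' (M : Matroid α) (X : Set α) : M.IsFlat (M.closure X) := by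
  rw [closure_def]
  rw [sInter_eq_iInter]
  haveI : Nonempty ↑{F | M.IsFlat F ∧ X ∩ M.E ⊆ F} := ⟨⟨M.E, M.ground_isFlat, inter_subset_right⟩⟩
  exact IsFlat.iInter fun F => F.2.1

lemma flat_inter (hF : M.IsFlat F) (hG : M.IsFlat G) : M.IsFlat (F ∩ G) := by
  rw [inter_eq_iInter]
  exact IsFlat.iInter (fun b => by cases b <;> simpa)

lemma IsFlat.eRk'_add_one_le (hF : M.IsFlat F) (hG : M.IsFlat G) (hss : F ⊂ G) :
    M.eRk' F + 1 ≤ M.eRk' G := by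
  obtain ⟨e, heG, heF⟩ := exists_of_ssubset hss
  rw [← eRk'_insert_eq hF.subset_ground (hG.subset_ground heG) (by rwa [hF.closure])]
  exact eRk'_mono (insert_subset heG hss.subset)

lemma flat_eq_of_subset_of_eRk'_le (hF : M.IsFlat F) (hG : M.IsFlat G) (hss : F ⊆ G)
    (hle : M.eRk' G ≤ M.eRk' F) (hfin : M.eRk' F ≠ ⊤) : F = G := by
  by_contra hne
  have h1 := hF.eRk'_add_one_le hG (hss.ssubset_of_ne hne)
  exact absurd (lt_of_lt_of_le ((ENat.add_one_le_iff hfin).1 h1) hle) (lt_irrefl _)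

lemma exists_flat_pred (hF : M.IsFlat F) (h0 : M.eRk' F ≠ 0) :
    ∃ F₀, M.IsFlat F₀ ∧ F₀ ⊆ F ∧ F₀ ≠ F ∧ M.eRk' F₀ + 1 = M.eRk' F := by
  obtain ⟨I, hI⟩ := M.exists_isBasis F hF.subset_ground
  have hIne : I.Nonempty := by
    rw [nonempty_iff_ne_empty]
    rintro rfl
    rw [hI.isBasis'.eRk'_eq, encard_empty] at h0
    exact h0 rfl
  obtain ⟨z, hz⟩ := hIne
  refine ⟨M.closure (I \ {z}), M.closure_flat' _, ?_, ?_, ?_⟩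
  · rw [← hF.closure, ← hI.closure_eq_closure]
    exact M.closure_subset_closure diff_subset
  · intro h
    have hzF : z ∈ F := hI.subset hz
    have h2 : z ∉ M.closure (I \ {z}) := hI.indep.notMem_closure_diff_of_mem hz
    rw [h] at h2
    exact h2 hzF
  · rw [eRk'_closure_eq ((hI.indep.subset diff_subset).subset_ground),
      (hI.indep.subset diff_subset).eRk'_eq, hI.isBasis'.eRk'_eq,
      encard_diff_singleton_add_one hz]

lemma exists_flat_succ (hF : M.IsFlat F) (hne : F ≠ M.E) :
    ∃ F₁, M.IsFlat F₁ ∧ F ⊆ F₁ ∧ F ≠ F₁ ∧ M.eRk' F₁ = M.eRk' F + 1 := by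
  obtain ⟨e, heE, heF⟩ := exists_of_ssubset (hF.subset_ground.ssubset_of_ne hne)
  refine ⟨M.closure (insert e F), M.closure_flat' _, ?_, ?_, ?_⟩
  · exact (subset_insert _ _).trans (M.subset_closure _ (insert_subset heE hF.subset_ground))
  · intro h
    exact heF (h ▸ M.mem_closure_of_mem (mem_insert _ _) (insert_subset heE hF.subset_ground))
  · rw [eRk'_closure_eq (insert_subset heE hF.subset_ground),
      eRk'_insert_eq hF.subset_ground heE (by rwa [hF.closure])]

lemma point'_singleton {M' : Matroid β} (hs : M'.Simple') {P : Set β} (hP : M'.Point' P) :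
    ∃ e, P = {e} := by
  obtain ⟨hPf, hP1⟩ := hP
  have hPE := hPf.subset_ground
  have hne : P.Nonempty := by
    rw [nonempty_iff_ne_empty]; rintro rfl
    have h0 : M'.eRk' (∅ : Set β) ≤ 0 :=
      eRk'_le_iff.2 (by rintro I - hI; simp [subset_empty_iff.1 hI])
    rw [hP1] at h0; simp at h0
  obtain ⟨f, hf⟩ := hne
  refine ⟨f, (eq_singleton_iff_unique_mem).2 ⟨hf, fun g hg => ?_⟩⟩
  by_contra hne'
  have hind : M'.Indep {g, f} :=
    hs _ (insert_subset (hPE hg) (by simpa using hPE hf)) (le_of_eq (Set.encard_pair hne'))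
  have h2 := encard_le_eRk' hind (insert_subset hg (by simpa using hf))
  rw [Set.encard_pair hne', hP1] at h2
  norm_num at h2

end Aux

section Adjoint

variable {M : Matroid α} {M' : Matroid β} {φ : Set α → Set β} {F : Set α}

lemma IsAdjointMap.eRk'_phi_add_le (hφ : IsAdjointMap M M' φ) :
    ∀ n : ℕ, ∀ F, M.IsFlat F → M.eRk' F = n → M'.eRk' (φ F) + n ≤ M.eRk' M.E := by
  intro n
  induction n with
  | zero =>
    intro F hF _
    simpa using (eRk'_le_ground (X := φ F)).trans_eq hφ.2.1
  | succ n ih =>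
    intro F hF hrk
    obtain ⟨F₀, hF₀, hsub, hne, hr0⟩ := exists_flat_pred hF
      (by rw [hrk]; exact_mod_cast Nat.succ_ne_zero n)
    have hr0' : M.eRk' F₀ = (n : ℕ∞) := by
      refine enat_add_right_cancel (by simp) (z := 1) ?_
      rw [hr0, hrk]; push_cast; ring
    have hstrict : φ F ⊂ φ F₀ := by
      refine (hφ.2.2.2.2.1 hF₀ hF hsub).ssubset_of_ne ?_
      intro h; exact hne (hφ.2.2.2.1 hF₀ hF h.symm)
    have h2 := (hφ.2.2.1 _ hF).eRk'_add_one_le (hφ.2.2.1 _ hF₀) hstrict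
    have h3 := ih F₀ hF₀ hr0'
    calc M'.eRk' (φ F) + (↑(n + 1) : ℕ∞) = (M'.eRk' (φ F) + 1) + n := by push_cast; ring
    _ ≤ M'.eRk' (φ F₀) + n := add_le_add_left h2 _
    _ ≤ M.eRk' M.E := h3

lemma IsAdjointMap.le_eRk'_phi_add (hφ : IsAdjointMap M M' φ) :
    ∀ c : ℕ, ∀ F, M.IsFlat F → M.eRk' M.E ≤ M.eRk' F + c →
      M.eRk' M.E ≤ M'.eRk' (φ F) + M.eRk' F := by
  intro c
  induction c with
  | zero =>
    intro F hF h
    simp only [Nat.cast_zero, add_zero] at h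
    exact h.trans le_add_self
  | succ c ih =>
    intro F hF h
    by_cases h' : M.eRk' M.E ≤ M.eRk' F + c
    · exact ih F hF h'
    have hFne : F ≠ M.E := by
      rintro rfl
      exact h' (le_add_right le_rfl)
    obtain ⟨F₁, hF₁, hsub, hne, hr1⟩ := exists_flat_succ hF hFne
    have h1 : M.eRk' M.E ≤ M.eRk' F₁ + c := by
      rw [hr1]
      calc M.eRk' M.E ≤ M.eRk' F + ↑(c + 1) := h
      _ = M.eRk' F + 1 + c := by push_cast; ring
    have h2 := ih F₁ hF₁ h1
    have hstrict : φ F₁ ⊂ φ F := by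
      refine (hφ.2.2.2.2.1 hF hF₁ hsub).ssubset_of_ne ?_
      intro hh; exact hne ((hφ.2.2.2.1 hF₁ hF hh).symm)
    have h3 := (hφ.2.2.1 _ hF₁).eRk'_add_one_le (hφ.2.2.1 _ hF) hstrict
    calc M.eRk' M.E ≤ M'.eRk' (φ F₁) + M.eRk' F₁ := h2
    _ = (M'.eRk' (φ F₁) + 1) + M.eRk' F := by rw [hr1]; ring
    _ ≤ M'.eRk' (φ F) + M.eRk' F := add_le_add_left h3 _

lemma IsAdjointMap.rank_formula [M.Finite] (hφ : IsAdjointMap M M' φ) (hF : M.IsFlat F) :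
    M'.eRk' (φ F) + M.eRk' F = M.eRk' M.E := by
  have hfin : M.eRk' F ≠ ⊤ := eRk'_ne_top
  have hfinE : M.eRk' M.E ≠ ⊤ := eRk'_ne_top
  refine le_antisymm ?_ ?_
  · have h := hφ.eRk'_phi_add_le (M.eRk' F).toNat F hF (ENat.coe_toNat hfin).symm
    rwa [ENat.coe_toNat hfin] at h
  · refine hφ.le_eRk'_phi_add (M.eRk' M.E).toNat F hF ?_
    rw [ENat.coe_toNat hfinE]
    exact le_add_self

lemma IsAdjointMap.eRk'_ne_top' [M.Finite] (hφ : IsAdjointMap M M' φ) (Y : Set β) :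
    M'.eRk' Y ≠ ⊤ := by
  intro h
  have h1 := (eRk'_le_ground (M := M') (X := Y)).trans_eq hφ.2.1
  rw [h, top_le_iff] at h1
  exact eRk'_ne_top h1

lemma IsAdjointMap.mem_phi_join [M.Finite] (hφ : IsAdjointMap M M' φ) {W₁ W₂ : Set α}
    (h1 : M.IsFlat W₁) (h2 : M.IsFlat W₂) (hne : W₁ ≠ W₂) (hrk : M.eRk' W₁ = M.eRk' W₂)
    (hj : M.eRk' (M.closure (W₁ ∪ W₂)) = M.eRk' W₁ + 1) {e : β}
    (he1 : e ∈ φ W₁) (he2 : e ∈ φ W₂) : e ∈ φ (M.closure (W₁ ∪ W₂)) := by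
  have hJf : M.IsFlat (M.closure (W₁ ∪ W₂)) := M.closure_flat' _
  have hWE : W₁ ∪ W₂ ⊆ M.E := union_subset h1.subset_ground h2.subset_ground
  have hsub1 : W₁ ⊆ M.closure (W₁ ∪ W₂) := subset_union_left.trans (M.subset_closure _ hWE)
  have hsub2 : W₂ ⊆ M.closure (W₁ ∪ W₂) := subset_union_right.trans (M.subset_closure _ hWE)
  have hf1 := hφ.2.2.1 _ h1
  have hf2 := hφ.2.2.1 _ h2
  have hfJ := hφ.2.2.1 _ hJf
  have hX : M'.IsFlat (φ W₁ ∩ φ W₂) := flat_inter hf1 hf2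
  have hJX : φ (M.closure (W₁ ∪ W₂)) ⊆ φ W₁ ∩ φ W₂ :=
    subset_inter (hφ.2.2.2.2.1 h1 hJf hsub1) (hφ.2.2.2.2.1 h2 hJf hsub2)
  have hr1 := hφ.rank_formula h1
  have hr2 := hφ.rank_formula h2
  have hrJ := hφ.rank_formula hJf
  have hfinW : M.eRk' W₁ ≠ ⊤ := eRk'_ne_top
  have hr12 : M'.eRk' (φ W₁) = M'.eRk' (φ W₂) := by
    rw [hrk] at hr1
    exact enat_add_right_cancel eRk'_ne_top (hr1.trans hr2.symm)
  have hXss : φ W₁ ∩ φ W₂ ≠ φ W₁ := by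
    intro hXe
    have hsub' : φ W₁ ⊆ φ W₂ := by rw [← hXe]; exact inter_subset_right
    have heq : φ W₁ = φ W₂ :=
      flat_eq_of_subset_of_eRk'_le hf1 hf2 hsub' (le_of_eq hr12.symm) (hφ.eRk'_ne_top' _)
    exact hne (hφ.2.2.2.1 h1 h2 heq)
  have hXlt : M'.eRk' (φ W₁ ∩ φ W₂) + 1 ≤ M'.eRk' (φ W₁) :=
    hX.eRk'_add_one_le hf1 (inter_subset_left.ssubset_of_ne hXss)
  have hrJval : M'.eRk' (φ (M.closure (W₁ ∪ W₂))) + 1 = M'.eRk' (φ W₁) := by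
    refine enat_add_right_cancel hfinW ?_
    calc M'.eRk' (φ (M.closure (W₁ ∪ W₂))) + 1 + M.eRk' W₁
        = M'.eRk' (φ (M.closure (W₁ ∪ W₂))) + (M.eRk' W₁ + 1) := by ring
    _ = M'.eRk' (φ (M.closure (W₁ ∪ W₂))) + M.eRk' (M.closure (W₁ ∪ W₂)) := by rw [hj]
    _ = M.eRk' M.E := hrJ
    _ = M'.eRk' (φ W₁) + M.eRk' W₁ := hr1.symm
  have hfinal : M'.eRk' (φ W₁ ∩ φ W₂) ≤ M'.eRk' (φ (M.closure (W₁ ∪ W₂))) := by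
    have h4 : M'.eRk' (φ W₁ ∩ φ W₂) + 1 ≤ M'.eRk' (φ (M.closure (W₁ ∪ W₂))) + 1 := by
      rw [hrJval]; exact hXlt
    exact (ENat.add_le_add_iff_right (by simp)).1 h4
  have heq : φ (M.closure (W₁ ∪ W₂)) = φ W₁ ∩ φ W₂ :=
    flat_eq_of_subset_of_eRk'_le hfJ hX hJX hfinal (hφ.eRk'_ne_top' _)
  rw [heq]
  exact ⟨he1, he2⟩

lemma IsAdjointMap.flat_subset_hyperplane [M.Finite] (hφ : IsAdjointMap M M' φ)
    {Hp : Set α} {e : β} (hF : M.IsFlat F) (hH : M.Hyperplane' Hp) (hpt : φ Hp = {e})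
    (he : e ∈ φ F) : F ⊆ Hp := by
  by_contra hns
  obtain ⟨x, hxF, hxH⟩ := not_subset.1 hns
  have hxE : x ∈ M.E := hF.subset_ground hxF
  have hAf : M.IsFlat (M.closure {x}) := M.closure_flat' _
  have hAF : M.closure {x} ⊆ F := by
    rw [← hF.closure]; exact M.closure_subset_closure (singleton_subset_iff.2 hxF)
  have heA : e ∈ φ (M.closure {x}) := hφ.2.2.2.2.1 hAf hF hAF he
  have hxA : x ∈ M.closure {x} := M.mem_closure_of_mem rfl (by simpa)
  have hxloop : x ∉ M.closure ∅ := by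
    intro h
    have h2 : M.closure ∅ ⊆ Hp := by
      rw [← hH.1.closure]; exact M.closure_subset_closure (empty_subset _)
    exact hxH (h2 h)
  have hxind : M.Indep {x} := by
    have h3 := (M.empty_indep.insert_indep_iff_of_notMem (notMem_empty x)).2 ⟨hxE, by simpa⟩
    simpa using h3
  have hArk : M.eRk' (M.closure {x}) = 1 := by
    rw [eRk'_closure_eq (by simpa), hxind.eRk'_eq, encard_singleton]
  have hrE : M.eRk' M.E ≠ ⊤ := eRk'_ne_top
  have key : ∀ v : ℕ, ∀ V, M.IsFlat V → V ⊆ Hp → M.eRk' V = v →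
      e ∈ φ (M.closure (M.closure {x} ∪ V)) ∧
        M.eRk' (M.closure (M.closure {x} ∪ V)) = (v : ℕ∞) + 1 := by
    intro v
    induction v with
    | zero =>
      intro V hV hVH hV0
      have hVA : V ⊆ M.closure {x} := by
        have hV0' : V ⊆ M.closure ∅ := by
          intro y hy
          by_contra hy'
          have hyE : y ∈ M.E := hV.subset_ground hy
          have hyind : M.Indep {y} := by
            have h3 := (M.empty_indep.insert_indep_iff_of_notMem (notMem_empty y)).2
              ⟨hyE, by simpa⟩
            simpa using h3
          have h1 := encard_le_eRk' hyind (singleton_subset_iff.2 hy)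
          rw [hV0, encard_singleton] at h1
          simpa using h1
        exact hV0'.trans (M.closure_subset_closure (empty_subset _))
      have hcl : M.closure (M.closure {x} ∪ V) = M.closure {x} := by
        rw [union_eq_self_of_subset_right hVA, hAf.closure]
      rw [hcl]
      exact ⟨heA, by rw [hArk]; simp⟩
    | succ v ih =>
      intro V hV hVH hVrk
      obtain ⟨V₀, hV₀, hV₀V, hV₀ne, hV₀rk⟩ := exists_flat_pred hV
        (by rw [hVrk]; simp)
      have hV₀v : M.eRk' V₀ = (v : ℕ∞) := by
        refine enat_add_right_cancel (z := 1) (by simp) ?_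
        rw [hV₀rk, hVrk]; push_cast; ring
      obtain ⟨he1, hW₁rk⟩ := ih V₀ hV₀ (hV₀V.trans hVH) hV₀v
      have hW₁f : M.IsFlat (M.closure (M.closure {x} ∪ V₀)) := M.closure_flat' _
      have hAW : M.closure {x} ∪ V₀ ⊆ M.E :=
        union_subset (M.closure_subset_ground _) hV₀.subset_ground
      have hxW₁ : x ∈ M.closure (M.closure {x} ∪ V₀) := M.subset_closure _ hAW (Or.inl hxA)
      have hW₁ne : M.closure (M.closure {x} ∪ V₀) ≠ V := fun h => hxH (hVH (h ▸ hxW₁))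
      have hrkeq : M.eRk' (M.closure (M.closure {x} ∪ V₀)) = M.eRk' V := by
        rw [hW₁rk, hVrk]; push_cast; ring
      have hjoin : M.closure (M.closure (M.closure {x} ∪ V₀) ∪ V)
          = M.closure (M.closure {x} ∪ V) := by
        rw [closure_union_closure_left_eq, union_assoc, union_eq_self_of_subset_left hV₀V]
      have hclx : M.closure (M.closure {x} ∪ V) = M.closure (insert x V) := by
        rw [closure_union_closure_left_eq, singleton_union]
      have hjrk : M.eRk' (M.closure (M.closure (M.closure {x} ∪ V₀) ∪ V))
          = M.eRk' (M.closure (M.closure {x} ∪ V₀)) + 1 := by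
        rw [hjoin, hclx, eRk'_closure_eq (insert_subset hxE hV.subset_ground),
          eRk'_insert_eq hV.subset_ground hxE (by rw [hV.closure]; exact fun hxV => hxH (hVH hxV)), hrkeq]
      have heHp : e ∈ φ Hp := by rw [hpt]; exact rfl
      have heV : e ∈ φ V := hφ.2.2.2.2.1 hV hH.1 hVH heHp
      have hkey := hφ.mem_phi_join hW₁f hV hW₁ne hrkeq hjrk he1 heV
      rw [hjoin] at hkey
      refine ⟨hkey, ?_⟩
      rw [← hjoin, hjrk, hW₁rk]
      push_cast; ring
  have hHrk : M.eRk' Hp ≠ ⊤ := eRk'_ne_top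
  obtain ⟨hfin_e, hfull⟩ := key (M.eRk' Hp).toNat Hp hH.1 Subset.rfl (ENat.coe_toNat hHrk).symm
  have hErk : M.eRk' (M.closure (M.closure {x} ∪ Hp)) = M.eRk' M.E := by
    rw [hfull, ENat.coe_toNat hHrk, hH.2]
  have hEeq : M.closure (M.closure {x} ∪ Hp) = M.E :=
    flat_eq_of_subset_of_eRk'_le (M.closure_flat' _) M.ground_isFlat
      (M.closure_subset_ground _) (le_of_eq hErk.symm) eRk'_ne_top
  rw [hEeq] at hfin_e
  have hr0 : M'.eRk' (φ M.E) = 0 := by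
    have h5 := hφ.rank_formula (F := M.E) M.ground_isFlat
    refine enat_add_right_cancel hrE ?_
    rw [h5, zero_add]
  have heE' : e ∈ M'.E := (hφ.2.2.1 _ M.ground_isFlat).subset_ground hfin_e
  have hesing : M'.Indep {e} := hφ.1 _ (by simpa) (by rw [encard_singleton]; norm_num)
  have h6 := encard_le_eRk' hesing (singleton_subset_iff.2 hfin_e)
  rw [encard_singleton, hr0] at h6
  simpa using h6

end Adjoint

/-- If `H 0, …, H (m-1)` are hyperplanes of `M` whose successive intersections strictly
decrease, then the corresponding points of the adjoint form an independent set in `M'`. -/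
theorem stmt1 (M : Matroid α) (M' : Matroid β) [M.Finite] (φ : Set α → Set β)
    (hφ : IsAdjointMap M M' φ) (m : ℕ) (H : ℕ → Set α)
    (hH : ∀ i < m, M.Hyperplane' (H i))
    (hchain : ∀ k, 1 ≤ k → k ≤ m - 1 →
      (⋂ i ∈ Finset.range (k + 1), H i) ⊂ ⋂ i ∈ Finset.range k, H i) :
    M'.Indep (⋃ i ∈ Finset.range m, φ (H i)) := by
  set Fk : ℕ → Set α := fun k => M.E ∩ ⋂ i ∈ Finset.range k, H i with hFk
  have hFs : ∀ k, Fk (k + 1) = Fk k ∩ H k := by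
    intro k
    rw [hFk]
    simp only
    rw [Finset.range_add_one, Finset.set_biInter_insert]
    ext y
    simp only [mem_inter_iff, mem_iInter]
    tauto
  have hFkflat : ∀ k, k ≤ m → M.IsFlat (Fk k) := by
    intro k
    induction k with
    | zero =>
      intro _
      have h0 : Fk 0 = M.E := by simp [hFk]
      rw [h0]; exact M.ground_isFlat
    | succ k ih =>
      intro hk
      rw [hFs k]
      exact flat_inter (ih (Nat.le_of_succ_le hk)) (hH k (Nat.lt_of_succ_le hk)).1
  have hFksubH : ∀ k, ∀ i < k, Fk k ⊆ H i := by
    intro k i hik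
    exact inter_subset_right.trans (Set.iInter₂_subset i (Finset.mem_range.2 hik))
  have hstrict : ∀ k < m, Fk (k + 1) ⊂ Fk k := by
    intro k hk
    rcases Nat.eq_zero_or_pos k with rfl | hk1
    · have h0 : Fk 0 = M.E := by simp [hFk]
      have h1 : Fk 1 = H 0 := by
        rw [hFs 0, h0]
        exact inter_eq_self_of_subset_right (hH 0 hk).1.subset_ground
      rw [h0, h1]
      refine (hH 0 hk).1.subset_ground.ssubset_of_ne ?_
      intro hEq
      have h2 := (hH 0 hk).2
      rw [hEq] at h2
      exact absurd ((ENat.add_one_le_iff (eRk'_ne_top)).1 (le_of_eq h2)) (lt_irrefl _)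
    · have hch := hchain k hk1 (Nat.le_sub_one_of_lt hk)
      have h0m : 0 < m := lt_of_le_of_lt (Nat.zero_le k) hk
      have hsub1 : (⋂ i ∈ Finset.range k, H i) ⊆ M.E :=
        (Set.iInter₂_subset 0 (Finset.mem_range.2 hk1)).trans
          (hH 0 h0m).1.subset_ground
      have hsub2 : (⋂ i ∈ Finset.range (k + 1), H i) ⊆ M.E :=
        (Set.iInter₂_subset 0 (Finset.mem_range.2 (Nat.lt_of_lt_of_le hk1 (Nat.le_succ k)))).trans
          (hH 0 h0m).1.subset_ground
      have e1 : Fk k = ⋂ i ∈ Finset.range k, H i := inter_eq_self_of_subset_right hsub1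
      have e2 : Fk (k + 1) = ⋂ i ∈ Finset.range (k + 1), H i :=
        inter_eq_self_of_subset_right hsub2
      rw [e1, e2]
      exact hch
  have hmain : ∀ k, k ≤ m → M'.Indep (⋃ i ∈ Finset.range k, φ (H i)) := by
    intro k
    induction k with
    | zero =>
      intro _
      simpa using M'.empty_indep
    | succ k ih =>
      intro hk1
      have hk : k < m := hk1
      have hSk := ih (le_of_lt hk)
      obtain ⟨q, hq⟩ := point'_singleton hφ.1 (hφ.2.2.2.2.2.1 _ (hH k hk))
      have hSsub : (⋃ i ∈ Finset.range k, φ (H i)) ⊆ φ (Fk k) := by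
        refine iUnion₂_subset fun i hi => ?_
        exact hφ.2.2.2.2.1 (hFkflat k (le_of_lt hk))
          (hH i (lt_of_lt_of_le (Finset.mem_range.1 hi) (le_of_lt hk))).1
          (hFksubH k i (Finset.mem_range.1 hi))
      have hSE : (⋃ i ∈ Finset.range k, φ (H i)) ⊆ M'.E :=
        hSsub.trans (hφ.2.2.1 _ (hFkflat k (le_of_lt hk))).subset_ground
      have hqnot : q ∉ M'.closure (⋃ i ∈ Finset.range k, φ (H i)) := by
        intro hqcl
        have hclsub : M'.closure (⋃ i ∈ Finset.range k, φ (H i)) ⊆ φ (Fk k) := by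
          rw [← (hφ.2.2.1 _ (hFkflat k (le_of_lt hk))).closure]
          exact M'.closure_subset_closure hSsub
        have hqF : q ∈ φ (Fk k) := hclsub hqcl
        have hsubH : Fk k ⊆ H k :=
          hφ.flat_subset_hyperplane (hFkflat k (le_of_lt hk)) (hH k hk) hq hqF
        have heq : Fk (k + 1) = Fk k := by
          rw [hFs k]
          exact inter_eq_self_of_subset_left hsubH
        exact (hstrict k hk).ne heq
      have hqE : q ∈ M'.E := (hφ.2.2.1 _ (hH k hk).1).subset_ground (hq ▸ rfl)
      have hqS : q ∉ (⋃ i ∈ Finset.range k, φ (H i)) := fun h =>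
        hqnot (M'.subset_closure _ hSE h)
      have hrw : (⋃ i ∈ Finset.range (k + 1), φ (H i))
          = insert q (⋃ i ∈ Finset.range k, φ (H i)) := by
        rw [Finset.range_add_one, Finset.set_biUnion_insert, hq, singleton_union]
      rw [hrw]
      exact (hSk.insert_indep_iff_of_notMem hqS).2 ⟨hqE, hqnot⟩
  exact hmain m le_rfl
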